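/- Let 1<p<q<∞ and 0<α<n with 1/p − 1/q = α/n, and let w be a weight on ℝ^n with A_{p,q}(w) < ∞. Then the one-tailed characteristic satisfies Ā_{p,q}(w) ≤ C_{p,q,n} A_{p,q}(w)^{1+max{p'/q, q/p'}}, where Ā_{p,q}(w) includes a sup over cubes Q of (avg over ℝ^n of ŝ_Q^q w^q)^{1/q}(avg_Q w^{−p'})^{1/p'} plus the dual term, with tail ŝ_Q(x) = (1+|x−c_Q|/|Q|^{1/n})^{α−n}. -/

import Mathlib

open MeasureTheory ENNReal Set

noncomputable section

abbrev E (n : ℕ) := EuclideanSpace ℝ (Fin n)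

/-- The axis-parallel cube in `ℝ^n` with center `c` and side length `s`. -/
def cube (n : ℕ) (c : E n) (s : ℝ) : Set (E n) :=
  {x | ∀ i, |x i - c i| ≤ s / 2}

/-- The tail `ŝ_Q(x) = (1 + |x−c_Q|/|Q|^{1/n})^{α−n}` of a cube with center `c` and side
length `s`. -/
noncomputable def tail (n : ℕ) (α : ℝ) (c : E n) (s : ℝ) (x : E n) : ℝ≥0∞ :=
  ENNReal.ofReal ((1 + ‖x - c‖ / s) ^ (α - (n : ℝ)))

/-- The (no-tail) one-weight Muckenhoupt characteristic `A_{p,q}(w)`. -/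
noncomputable def Apq (n : ℕ) (p q : ℝ) (w : E n → ℝ≥0∞) : ℝ≥0∞ :=
  ⨆ (c : E n) (s : ℝ) (_ : 0 < s),
    ((ENNReal.ofReal (s ^ n))⁻¹ * ∫⁻ x in cube n c s, w x ^ q) ^ (1 / q) *
      ((ENNReal.ofReal (s ^ n))⁻¹ * ∫⁻ x in cube n c s, w x ^ (-(p / (p - 1)))) ^ (1 - 1 / p)

/-- The one-tailed one-weight characteristic `Ā_{p,q}(w)`: the sum of the two versions in
which exactly one factor carries the tail `ŝ_Q`. -/
noncomputable def AbarPq (n : ℕ) (α p q : ℝ) (w : E n → ℝ≥0∞) : ℝ≥0∞ :=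
  (⨆ (c : E n) (s : ℝ) (_ : 0 < s),
      ((ENNReal.ofReal (s ^ n))⁻¹ * ∫⁻ x, tail n α c s x ^ q * w x ^ q) ^ (1 / q) *
        ((ENNReal.ofReal (s ^ n))⁻¹ * ∫⁻ x in cube n c s, w x ^ (-(p / (p - 1)))) ^ (1 - 1 / p)) +
    ⨆ (c : E n) (s : ℝ) (_ : 0 < s),
      ((ENNReal.ofReal (s ^ n))⁻¹ * ∫⁻ x in cube n c s, w x ^ q) ^ (1 / q) *
        ((ENNReal.ofReal (s ^ n))⁻¹ *
            ∫⁻ x, tail n α c s x ^ (p / (p - 1)) * w x ^ (-(p / (p - 1)))) ^ (1 - 1 / p)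


/-!
Write `u = w ^ q`, `σ = w ^ (-p')`, so that `u ^ (1/q) * σ ^ (1/p') = 1`, and split `ℝⁿ` into the
dyadic annuli `2ᵏQ \ 2ᵏ⁻¹Q` of a cube `Q`. On the `k`-th annulus the tail is `≲ 2^{-k(n-α)}`, and
the `A_{p,q}` condition on `2ᵏQ` bounds `∫_{2ᵏQ} u` by `A^q |2ᵏQ|^{1+q/p'} σ(2ᵏQ)^{-q/p'}`. The
balance `1/q + 1/p' = 1 - α/n` makes the powers of `2ᵏ` cancel exactly, leaving
`∑ₖ (σ(Q) / σ(2ᵏQ))^{q/p'}`. Hölder's inequality on an annulus `2Q' \ Q'` combined with the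
`A_{p,q}` condition on `2Q'` gives the reverse doubling `σ(2Q') ≤ K σ(2Q' \ Q')` with `K ≈ A^{p'}`,
so `σ(Q') ≤ (1 - K⁻¹) σ(2Q')` and the sum is a geometric series of size `≲ K`. Altogether the
`q`-th power of the first half of `Ā_{p,q}` is `≲ A^q A^{p'}`; the second half is the same
argument with `(u, q)` and `(σ, p')` interchanged.
-/

section Holder

variable {X : Type*} [MeasurableSpace X] {μ : Measure X} {u σ : X → ℝ≥0∞} {γ : ℝ}

theorem measure_univ_rpow_le_lintegral_mul_rpow (hγ : 0 < γ) (hu : AEMeasurable u μ)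
    (hσ : AEMeasurable σ μ) (huσ : ∀ x, u x * σ x ^ γ = 1) :
    μ univ ^ (1 + γ) ≤ (∫⁻ x, u x ∂μ) * (∫⁻ x, σ x ∂μ) ^ γ := by
  have hconj : (1 + γ).HolderConjugate ((1 + γ) / γ) :=
    Real.holderConjugate_iff.mpr ⟨by linarith, by field_simp⟩
  have hfg : ∀ x, u x ^ (1 / (1 + γ)) * σ x ^ (γ / (1 + γ)) = 1 := fun x => by
    rw [div_eq_mul_one_div γ, ENNReal.rpow_mul, ← ENNReal.mul_rpow_of_nonneg _ _ (by positivity),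
      huσ, ENNReal.one_rpow]
  have holder := ENNReal.lintegral_mul_le_Lp_mul_Lq μ hconj (hu.pow_const (1 / (1 + γ)))
    (hσ.pow_const (γ / (1 + γ)))
  have e₁ : 1 / (1 + γ) * (1 + γ) = 1 := by field_simp
  have e₂ : γ / (1 + γ) * ((1 + γ) / γ) = 1 := by field_simp
  have e₃ : 1 / ((1 + γ) / γ) = γ / (1 + γ) := by field_simp
  simp only [Pi.mul_apply, hfg, lintegral_one, ← ENNReal.rpow_mul, e₁, e₂, e₃,
    ENNReal.rpow_one] at holder
  calc μ univ ^ (1 + γ)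
      ≤ ((∫⁻ x, u x ∂μ) ^ (1 / (1 + γ)) * (∫⁻ x, σ x ∂μ) ^ (γ / (1 + γ))) ^ (1 + γ) := by
        gcongr
    _ = (∫⁻ x, u x ∂μ) * (∫⁻ x, σ x ∂μ) ^ γ := by
        rw [ENNReal.mul_rpow_of_nonneg _ _ (by positivity), ← ENNReal.rpow_mul,
          ← ENNReal.rpow_mul, e₁, div_mul_cancel₀ γ (by positivity), ENNReal.rpow_one]

/-- Reverse doubling: Hölder on `E` bounds `μ E` by the integrals of `u` and `σ` over `E`, and the
two-weight condition on `S ⊇ E` turns this into a lower bound for `∫_E σ`. -/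
theorem setLIntegral_le_mul_setLIntegral_of_measure_le_two_mul {B : ℝ≥0∞} {S E : Set X}
    (hγ : 0 < γ) (hu : AEMeasurable u μ) (hσ : AEMeasurable σ μ)
    (huσ : ∀ x, u x * σ x ^ γ = 1) (hES : E ⊆ S) (hS₀ : μ S ≠ 0) (hS : μ S ≠ ∞)
    (hdoub : μ S ≤ 2 * μ E)
    (hB : (∫⁻ x in S, u x ∂μ) * (∫⁻ x in S, σ x ∂μ) ^ γ ≤ B * μ S ^ (1 + γ)) :
    ∫⁻ x in S, σ x ∂μ ≤ (2 ^ (1 + γ) * B) ^ γ⁻¹ * ∫⁻ x in E, σ x ∂μ := by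
  set m := ∫⁻ x in S, σ x ∂μ
  set Y := ∫⁻ x in E, σ x ∂μ
  have holder := measure_univ_rpow_le_lintegral_mul_rpow hγ hu.restrict hσ.restrict huσ
    (μ := μ.restrict E)
  rw [Measure.restrict_apply_univ] at holder
  have key : μ S ^ (1 + γ) * m ^ γ ≤ μ S ^ (1 + γ) * (2 ^ (1 + γ) * B * Y ^ γ) :=
    calc μ S ^ (1 + γ) * m ^ γ
        ≤ 2 ^ (1 + γ) * μ E ^ (1 + γ) * m ^ γ := by
          rw [← ENNReal.mul_rpow_of_nonneg _ _ (by positivity)]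
          gcongr
      _ ≤ 2 ^ (1 + γ) * ((∫⁻ x in S, u x ∂μ) * Y ^ γ) * m ^ γ := by
          gcongr
          exact holder.trans (by gcongr)
      _ = 2 ^ (1 + γ) * Y ^ γ * ((∫⁻ x in S, u x ∂μ) * m ^ γ) := by ring
      _ ≤ 2 ^ (1 + γ) * Y ^ γ * (B * μ S ^ (1 + γ)) := by gcongr
      _ = μ S ^ (1 + γ) * (2 ^ (1 + γ) * B * Y ^ γ) := by ring
  have hm : m ^ γ ≤ 2 ^ (1 + γ) * B * Y ^ γ :=
    (ENNReal.mul_le_mul_iff_right (by simp [hS₀, hS]) (by simp [hS₀, hS])).mp key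
  calc m = (m ^ γ) ^ γ⁻¹ := by rw [← ENNReal.rpow_mul, mul_inv_cancel₀ hγ.ne', ENNReal.rpow_one]
    _ ≤ (2 ^ (1 + γ) * B * Y ^ γ) ^ γ⁻¹ := by gcongr
    _ = (2 ^ (1 + γ) * B) ^ γ⁻¹ * Y := by
        rw [ENNReal.mul_rpow_of_nonneg _ _ (by positivity), ← ENNReal.rpow_mul,
          mul_inv_cancel₀ hγ.ne', ENNReal.rpow_one]

end Holder

theorem le_one_sub_inv_mul_of_add_eq {x y z K : ℝ≥0∞} (hK : 1 < K) (hxyz : x + y = z)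
    (hz : z ≤ K * y) : x ≤ (1 - K⁻¹) * z := by
  rcases eq_or_ne z ∞ with rfl | hz_top
  · rw [ENNReal.mul_top (tsub_pos_of_lt (ENNReal.inv_lt_one.mpr hK)).ne']
    exact le_top
  have hy : K⁻¹ * z ≤ y := by
    rw [mul_comm]
    exact ENNReal.div_le_of_le_mul' hz
  calc x = z - y :=
        ENNReal.eq_sub_of_add_eq (ne_top_of_le_ne_top hz_top (hxyz ▸ le_add_self)) hxyz
    _ ≤ z - K⁻¹ * z := tsub_le_tsub_left hy z
    _ = (1 - K⁻¹) * z := by rw [ENNReal.sub_mul fun _ _ => hz_top, one_mul]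

theorem ofReal_min_mul_le_one_sub_rpow {e : ℝ≥0∞} (he : e ≤ 1) {γ : ℝ} (hγ : 0 < γ) :
    ENNReal.ofReal (min γ 1) * e ≤ 1 - (1 - e) ^ γ := by
  set θ := min γ 1
  have hθ : 0 < θ := lt_min hγ one_pos
  obtain ⟨ε, hε, rfl⟩ : ∃ ε : ℝ, 0 ≤ ε ∧ ENNReal.ofReal ε = e :=
    ⟨e.toReal, toReal_nonneg, ofReal_toReal (ne_top_of_le_ne_top one_ne_top he)⟩
  have hε₁ : ε ≤ 1 := by simpa using ENNReal.ofReal_le_one.mp he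
  have bernoulli : (1 - ε) ^ θ ≤ 1 - θ * ε := by
    simpa [sub_eq_add_neg] using
      rpow_one_add_le_one_add_mul_self (s := -ε) (by linarith) hθ.le (min_le_right _ _)
  calc ENNReal.ofReal θ * ENNReal.ofReal ε = 1 - ENNReal.ofReal (1 - θ * ε) := by
        rw [← ENNReal.ofReal_mul hθ.le, ← ENNReal.ofReal_one,
          ← ENNReal.ofReal_sub _ (by nlinarith [min_le_right γ 1]), _root_.sub_sub_cancel]
    _ ≤ 1 - (1 - ENNReal.ofReal ε) ^ θ := by
        refine tsub_le_tsub_left ?_ 1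
        rw [← ENNReal.ofReal_one, ← ENNReal.ofReal_sub _ hε,
          ENNReal.ofReal_rpow_of_nonneg (by linarith) hθ.le]
        exact ENNReal.ofReal_le_ofReal bernoulli
    _ ≤ 1 - (1 - ENNReal.ofReal ε) ^ γ :=
        tsub_le_tsub_left (ENNReal.rpow_le_rpow_of_exponent_ge tsub_le_self (min_le_left _ _)) 1

theorem tsum_rpow_one_sub_inv_pow_le {K : ℝ≥0∞} (hK : 1 ≤ K) {γ : ℝ} (hγ : 0 < γ) :
    ∑' k : ℕ, ((1 - K⁻¹) ^ γ) ^ k ≤ K / ENNReal.ofReal (min γ 1) := by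
  rw [ENNReal.tsum_geometric, div_eq_mul_inv, ← inv_inv K,
    ← ENNReal.mul_inv (by simp) (by simp [hγ]), inv_inv, mul_comm]
  exact ENNReal.inv_le_inv.mpr (ofReal_min_mul_le_one_sub_rpow (ENNReal.inv_le_one.mpr hK) hγ)

theorem inv_mul_rpow_mul_inv_mul_rpow_le_iff {V U m D : ℝ≥0∞} {a b : ℝ} (hV₀ : V ≠ 0)
    (hV : V ≠ ∞) (ha : 0 < a) (hb : 0 ≤ b) :
    (V⁻¹ * U) ^ (1 / a) * (V⁻¹ * m) ^ (1 / b) ≤ D ↔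
      U * m ^ (a / b) ≤ D ^ a * V ^ (1 + a / b) := by
  rw [← ENNReal.rpow_le_rpow_iff ha, ENNReal.mul_rpow_of_nonneg _ _ ha.le, ← ENNReal.rpow_mul,
    ← ENNReal.rpow_mul, one_div_mul_cancel ha.ne', ENNReal.rpow_one, one_div_mul_eq_div,
    ENNReal.mul_rpow_of_nonneg _ _ (by positivity), ENNReal.inv_rpow,
    show V⁻¹ * U * ((V ^ (a / b))⁻¹ * m ^ (a / b)) = (V ^ (1 + a / b))⁻¹ * (U * m ^ (a / b)) by
      rw [ENNReal.rpow_add _ _ hV₀ hV, ENNReal.rpow_one, ENNReal.mul_inv (.inl hV₀) (.inl hV)]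
      ring,
    ENNReal.inv_mul_le_iff (by simp [hV₀, hV]) (by simp [hV₀, hV]), mul_comm (V ^ _)]

theorem mul_rpow_div_eq_one {x y : ℝ≥0∞} {a b : ℝ} (ha : 0 < a)
    (h : x ^ (1 / a) * y ^ (1 / b) = 1) : x * y ^ (a / b) = 1 := by
  simpa [ENNReal.mul_rpow_of_nonneg _ _ ha.le, ← ENNReal.rpow_mul, ha.ne', div_eq_inv_mul]
    using congrArg (· ^ a) h

section Cube

variable {n : ℕ} {c : E n} {s : ℝ}

theorem cube_eq_preimage (c : E n) (s : ℝ) :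
    cube n c s = (MeasurableEquiv.toLp 2 (Fin n → ℝ)).symm ⁻¹'
      univ.pi fun i => Icc (c i - s / 2) (c i + s / 2) := by
  ext x
  simp only [cube, mem_ofPred_eq, mem_preimage, mem_univ_pi, mem_Icc, abs_sub_le_iff,
    MeasurableEquiv.coe_toLp_symm]
  exact forall_congr' fun i => by constructor <;> rintro ⟨h₁, h₂⟩ <;> constructor <;> linarith

theorem measurableSet_cube (c : E n) (s : ℝ) : MeasurableSet (cube n c s) := by
  rw [cube_eq_preimage]
  exact (MeasurableEquiv.toLp 2 _).symm.measurable (.univ_pi fun _ => measurableSet_Icc)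

theorem volume_cube (c : E n) (hs : 0 ≤ s) : volume (cube n c s) = ENNReal.ofReal (s ^ n) := by
  rw [cube_eq_preimage,
    (EuclideanSpace.volume_preserving_symm_measurableEquiv_toLp (Fin n)).measure_preimage
      (MeasurableSet.univ_pi fun _ => measurableSet_Icc).nullMeasurableSet, volume_pi_pi]
  simp [Real.volume_Icc, ENNReal.ofReal_pow hs]

theorem cube_mono (c : E n) {s t : ℝ} (hst : s ≤ t) : cube n c s ⊆ cube n c t :=
  fun _ hx i => (hx i).trans (by linarith)

theorem mem_cube_of_norm_sub_le {x : E n} (hx : ‖x - c‖ ≤ s / 2) : x ∈ cube n c s :=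
  fun i => by simpa using (PiLp.norm_apply_le (x - c) i).trans hx

theorem half_lt_norm_sub_of_notMem_cube {x : E n} (hx : x ∉ cube n c s) : s / 2 < ‖x - c‖ :=
  not_le.mp fun h => hx (mem_cube_of_norm_sub_le h)

theorem iUnion_cube_two_pow_mul (c : E n) (hs : 0 < s) :
    ⋃ k : ℕ, cube n c (2 ^ k * s) = univ := by
  refine eq_univ_of_forall fun x => mem_iUnion.mpr ?_
  obtain ⟨k, hk⟩ := pow_unbounded_of_one_lt (2 * ‖x - c‖ / s) one_lt_two
  refine ⟨k, mem_cube_of_norm_sub_le ?_⟩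
  rw [div_lt_iff₀ hs] at hk
  linarith

theorem monotone_cube_two_pow_mul (c : E n) (hs : 0 ≤ s) :
    Monotone fun k : ℕ => cube n c (2 ^ k * s) :=
  fun _ _ hij => cube_mono c (by gcongr; exact one_le_two)

theorem volume_cube_two_mul_le (hn : n ≠ 0) (c : E n) (hs : 0 ≤ s) :
    volume (cube n c (2 * s)) ≤ 2 * volume (cube n c (2 * s) \ cube n c s) := by
  rw [measure_sdiff (cube_mono c (by linarith)) (measurableSet_cube c s).nullMeasurableSet
    (by simp [volume_cube c hs]), volume_cube c hs, volume_cube c (by linarith),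
    ← ENNReal.ofReal_sub _ (by positivity), ← ENNReal.ofReal_ofNat 2,
    ← ENNReal.ofReal_mul zero_le_two]
  refine ENNReal.ofReal_le_ofReal ?_
  have : 2 ≤ (2 : ℝ) ^ n := le_self_pow₀ one_le_two hn
  rw [mul_pow]
  nlinarith [pow_nonneg hs n]

theorem le_four_mul_of_mem_disjointed {x : E n} {k : ℕ} (hs : 0 ≤ s)
    (hx : x ∈ disjointed (fun k : ℕ => cube n c (2 ^ k * s)) k) :
    2 ^ k * s ≤ 4 * (s + ‖x - c‖) := by
  cases k with
  | zero =>
    have := norm_nonneg (x - c)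
    linarith
  | succ k =>
    rw [(monotone_cube_two_pow_mul c hs).disjointed_add_one] at hx
    have := half_lt_norm_sub_of_notMem_cube hx.2
    rw [pow_succ]
    linarith

theorem tail_rpow_le {α a ℓ : ℝ} {x : E n} (hs : 0 < s) (hℓ : 0 < ℓ) (ha : 0 ≤ a)
    (hαn : α ≤ n) (hx : ℓ ≤ 4 * (s + ‖x - c‖)) :
    tail n α c s x ^ a ≤ ENNReal.ofReal ((4 * s / ℓ) ^ ((n - α) * a)) := by
  have hy : 0 < 1 + ‖x - c‖ / s := by positivity
  rw [tail, ENNReal.ofReal_rpow_of_nonneg (by positivity) ha, ← Real.rpow_mul hy.le,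
    show (α - n) * a = -((n - α) * a) by ring, Real.rpow_neg hy.le, ← Real.inv_rpow hy.le]
  refine ENNReal.ofReal_le_ofReal (Real.rpow_le_rpow (by positivity) ?_
    (mul_nonneg (by linarith) ha))
  rw [one_add_div hs.ne', inv_div, div_le_div_iff₀ (by positivity) hℓ]
  nlinarith

theorem ofReal_rpow_mul_ofReal_pow_rpow {e γ ℓ : ℝ} (hs : 0 < s) (hℓ : 0 < ℓ)
    (he : n * (1 + γ) = e) :
    ENNReal.ofReal ((4 * s / ℓ) ^ e) * ENNReal.ofReal (ℓ ^ n) ^ (1 + γ) =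
      ENNReal.ofReal (4 ^ e) * ENNReal.ofReal (s ^ n) ^ (1 + γ) := by
  have hpow : ∀ {r : ℝ}, 0 < r → ENNReal.ofReal (r ^ n) ^ (1 + γ) = ENNReal.ofReal (r ^ e) :=
    fun hr => by
      rw [ENNReal.ofReal_rpow_of_pos (by positivity), ← Real.rpow_natCast,
        ← Real.rpow_mul hr.le, he]
  rw [hpow hs, hpow hℓ, ← ENNReal.ofReal_mul (by positivity),
    ← ENNReal.ofReal_mul (by positivity), ← Real.mul_rpow (by positivity) hℓ.le,
    ← Real.mul_rpow (by norm_num) hs.le, div_mul_cancel₀ _ hℓ.ne']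

end Cube

/-- `Apq n p q w` is `twoWeightChar n q p' (w ^ q) (w ^ (-p'))`, and the two halves of
`AbarPq n α p q w` are `tailedChar` for the exponent pairs `(q, p')` and `(p', q)`. -/
def twoWeightChar (n : ℕ) (a b : ℝ) (u σ : E n → ℝ≥0∞) : ℝ≥0∞ :=
  ⨆ (c : E n) (s : ℝ) (_ : 0 < s),
    ((ENNReal.ofReal (s ^ n))⁻¹ * ∫⁻ x in cube n c s, u x) ^ (1 / a) *
      ((ENNReal.ofReal (s ^ n))⁻¹ * ∫⁻ x in cube n c s, σ x) ^ (1 / b)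

def tailedChar (n : ℕ) (α a b : ℝ) (u σ : E n → ℝ≥0∞) : ℝ≥0∞ :=
  ⨆ (c : E n) (s : ℝ) (_ : 0 < s),
    ((ENNReal.ofReal (s ^ n))⁻¹ * ∫⁻ x, tail n α c s x ^ a * u x) ^ (1 / a) *
      ((ENNReal.ofReal (s ^ n))⁻¹ * ∫⁻ x in cube n c s, σ x) ^ (1 / b)

def reverseDoublingConst (a b : ℝ) (A : ℝ≥0∞) : ℝ≥0∞ :=
  (2 ^ (1 + a / b) * A ^ a) ^ (a / b)⁻¹

def tailConst (n : ℕ) (α a b : ℝ) : ℝ≥0∞ :=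
  (ENNReal.ofReal (4 ^ ((n - α) * a)) * (2 ^ (1 + a / b)) ^ (a / b)⁻¹ /
    ENNReal.ofReal (min (a / b) 1)) ^ (1 / a)

theorem twoWeightChar_comm (n : ℕ) (a b : ℝ) (u σ : E n → ℝ≥0∞) :
    twoWeightChar n a b u σ = twoWeightChar n b a σ u := by
  simp only [twoWeightChar, mul_comm]

theorem one_lt_reverseDoublingConst {a b : ℝ} (ha : 0 < a) (hb : 0 < b) {A : ℝ≥0∞}
    (hA : 1 ≤ A) : 1 < reverseDoublingConst a b A := by
  have h2 : (1 : ℝ≥0∞) < 2 ^ (1 + a / b) := ENNReal.one_lt_rpow one_lt_two (by positivity)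
  exact ENNReal.one_lt_rpow (h2.trans_le (le_mul_of_one_le_right' (ENNReal.one_le_rpow hA ha)))
    (by positivity)

theorem tailConst_ne_top (n : ℕ) (α : ℝ) {a b : ℝ} (ha : 0 < a) (hb : 0 < b) :
    tailConst n α a b ≠ ∞ := by
  have : 0 < min (a / b) 1 := lt_min (by positivity) one_pos
  exact ENNReal.rpow_ne_top_of_nonneg (by positivity)
    (ENNReal.div_ne_top (by finiteness) (by simpa using this))

theorem tailConst_mul_rpow_rpow (n : ℕ) (α : ℝ) {a b : ℝ} (ha : 0 < a) (hb : 0 < b)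
    (A : ℝ≥0∞) :
    (tailConst n α a b * A ^ (1 + b / a)) ^ a = ENNReal.ofReal (4 ^ ((n - α) * a)) * A ^ a *
      (reverseDoublingConst a b A / ENNReal.ofReal (min (a / b) 1)) := by
  rw [tailConst, reverseDoublingConst, ENNReal.mul_rpow_of_nonneg _ _ ha.le,
    ← ENNReal.rpow_mul, one_div_mul_cancel ha.ne', ENNReal.rpow_one,
    ENNReal.mul_rpow_of_nonneg _ _ (by positivity), ← ENNReal.rpow_mul A,
    ← ENNReal.rpow_mul A, show a * (a / b)⁻¹ = b by field_simp,
    show (1 + b / a) * a = a + b by field_simp, ENNReal.rpow_add_of_nonneg _ _ ha.le hb.le]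
  simp only [div_eq_mul_inv]
  ring

section Char

variable {n : ℕ} {α a b : ℝ} {u σ : E n → ℝ≥0∞}

theorem setLIntegral_mul_rpow_le_twoWeightChar (ha : 0 < a) (hb : 0 ≤ b) (c : E n) {s : ℝ}
    (hs : 0 < s) :
    (∫⁻ x in cube n c s, u x) * (∫⁻ x in cube n c s, σ x) ^ (a / b) ≤
      twoWeightChar n a b u σ ^ a * volume (cube n c s) ^ (1 + a / b) := by
  rw [volume_cube c hs.le, ← inv_mul_rpow_mul_inv_mul_rpow_le_iff (by simp; positivity)
    ofReal_ne_top ha hb]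
  exact le_iSup₂_of_le c s (le_iSup_of_le hs le_rfl)

theorem one_le_twoWeightChar (ha : 0 < a) (hb : 0 < b) (hu : Measurable u) (hσ : Measurable σ)
    (huσ : ∀ x, u x ^ (1 / a) * σ x ^ (1 / b) = 1) : 1 ≤ twoWeightChar n a b u σ := by
  have hvol : volume (cube n 0 1) = 1 := by simp [volume_cube (0 : E n) zero_le_one]
  have holder := measure_univ_rpow_le_lintegral_mul_rpow (μ := volume.restrict (cube n 0 1))
    (by positivity) hu.aemeasurable hσ.aemeasurable fun x => mul_rpow_div_eq_one ha (huσ x)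
  have hchar := setLIntegral_mul_rpow_le_twoWeightChar (u := u) (σ := σ) ha hb.le 0 one_pos
  rw [Measure.restrict_apply_univ, hvol, ENNReal.one_rpow] at holder
  rw [hvol, ENNReal.one_rpow, mul_one] at hchar
  rw [← ENNReal.rpow_le_rpow_iff ha, ENNReal.one_rpow]
  exact holder.trans hchar

theorem setLIntegral_cube_le_pow_mul (hn : n ≠ 0) (ha : 0 < a) (hb : 0 < b) (hu : Measurable u)
    (hσ : Measurable σ) (huσ : ∀ x, u x ^ (1 / a) * σ x ^ (1 / b) = 1) (c : E n) {s : ℝ}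
    (hs : 0 < s) (k : ℕ) :
    ∫⁻ x in cube n c s, σ x ≤
      (1 - (reverseDoublingConst a b (twoWeightChar n a b u σ))⁻¹) ^ k *
        ∫⁻ x in cube n c (2 ^ k * s), σ x := by
  set K := reverseDoublingConst a b (twoWeightChar n a b u σ)
  set m : ℕ → ℝ≥0∞ := fun k => ∫⁻ x in cube n c (2 ^ k * s), σ x
  have hK := one_lt_reverseDoublingConst ha hb (one_le_twoWeightChar ha hb hu hσ huσ)
  have hstep : ∀ k, m k ≤ (1 - K⁻¹) * m (k + 1) := fun k => by
    set ℓ := 2 ^ k * s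
    have hℓ : 0 < ℓ := by positivity
    have hsucc : 2 ^ (k + 1) * s = 2 * ℓ := by ring
    have hsub : cube n c ℓ ⊆ cube n c (2 * ℓ) := cube_mono c (by linarith)
    have hvol := volume_cube c (by positivity : 0 ≤ 2 * ℓ)
    refine le_one_sub_inv_mul_of_add_eq (y := ∫⁻ x in cube n c (2 * ℓ) \ cube n c ℓ, σ x) hK ?_ ?_
    · rw [← lintegral_union ((measurableSet_cube c _).diff (measurableSet_cube c _))
        disjoint_sdiff_right, union_sdiff_cancel hsub, ← hsucc]
    · simp only [m, hsucc]
      exact setLIntegral_le_mul_setLIntegral_of_measure_le_two_mul (by positivity)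
        hu.aemeasurable hσ.aemeasurable (fun x => mul_rpow_div_eq_one ha (huσ x)) sdiff_subset
        (by rw [hvol, ne_eq, ENNReal.ofReal_eq_zero, not_le]; positivity) (hvol ▸ ofReal_ne_top)
        (volume_cube_two_mul_le hn c hℓ.le)
        (setLIntegral_mul_rpow_le_twoWeightChar ha hb.le c (by positivity))
  have hiter : ∀ k, m 0 ≤ (1 - K⁻¹) ^ k * m k := fun k => by
    induction k with
    | zero => simp
    | succ k ih =>
      calc m 0 ≤ (1 - K⁻¹) ^ k * m k := ih
        _ ≤ (1 - K⁻¹) ^ k * ((1 - K⁻¹) * m (k + 1)) := by gcongr; exact hstep k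
        _ = (1 - K⁻¹) ^ (k + 1) * m (k + 1) := by ring
  simpa [m] using hiter k

theorem lintegral_tail_rpow_mul_le (ha : 0 ≤ a) (hαn : α ≤ n) (hu : Measurable u) (c : E n)
    {s : ℝ} (hs : 0 < s) :
    ∫⁻ x, tail n α c s x ^ a * u x ≤ ∑' k : ℕ,
      ENNReal.ofReal ((4 * s / (2 ^ k * s)) ^ ((n - α) * a)) *
        ∫⁻ x in cube n c (2 ^ k * s), u x := by
  set Q : ℕ → Set (E n) := fun k => cube n c (2 ^ k * s)
  calc ∫⁻ x, tail n α c s x ^ a * u x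
      = ∫⁻ x in ⋃ k, disjointed Q k, tail n α c s x ^ a * u x := by
        rw [iUnion_disjointed, iUnion_cube_two_pow_mul c hs, setLIntegral_univ]
    _ ≤ ∑' k, ∫⁻ x in disjointed Q k, tail n α c s x ^ a * u x := lintegral_iUnion_le _ _
    _ ≤ _ := ENNReal.tsum_le_tsum fun k => calc
        ∫⁻ x in disjointed Q k, tail n α c s x ^ a * u x
        _ ≤ ∫⁻ x in disjointed Q k,
              ENNReal.ofReal ((4 * s / (2 ^ k * s)) ^ ((n - α) * a)) * u x :=
          setLIntegral_mono (hu.const_mul _) fun x hx => by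
            gcongr
            exact tail_rpow_le hs (by positivity) ha hαn (le_four_mul_of_mem_disjointed hs.le hx)
        _ = ENNReal.ofReal ((4 * s / (2 ^ k * s)) ^ ((n - α) * a)) *
              ∫⁻ x in disjointed Q k, u x :=
          lintegral_const_mul _ hu
        _ ≤ _ := by gcongr; exact disjointed_subset Q k

/-- The balance condition makes `T k * |2ᵏQ| ^ (1 + a/b)` independent of `k`, where
`T k = (4 / 2ᵏ) ^ ((n - α) * a)` bounds the tail on the `k`-th dyadic annulus. -/
theorem ofReal_mul_setLIntegral_mul_rpow_le (hn : n ≠ 0) (ha : 0 < a) (hb : 0 < b)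
    (he : n * (1 + a / b) = (n - α) * a) (hu : Measurable u) (hσ : Measurable σ)
    (huσ : ∀ x, u x ^ (1 / a) * σ x ^ (1 / b) = 1) (c : E n) {s : ℝ} (hs : 0 < s) (k : ℕ) :
    ENNReal.ofReal ((4 * s / (2 ^ k * s)) ^ ((n - α) * a)) *
        (∫⁻ x in cube n c (2 ^ k * s), u x) * (∫⁻ x in cube n c s, σ x) ^ (a / b) ≤
      ENNReal.ofReal (4 ^ ((n - α) * a)) * ENNReal.ofReal (s ^ n) ^ (1 + a / b) *
        twoWeightChar n a b u σ ^ a *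
        ((1 - (reverseDoublingConst a b (twoWeightChar n a b u σ))⁻¹) ^ (a / b)) ^ k := by
  set A := twoWeightChar n a b u σ
  set t := 1 - (reverseDoublingConst a b A)⁻¹
  set T := ENNReal.ofReal ((4 * s / (2 ^ k * s)) ^ ((n - α) * a))
  set U := ∫⁻ x in cube n c (2 ^ k * s), u x
  set m := ∫⁻ x in cube n c (2 ^ k * s), σ x
  calc T * U * (∫⁻ x in cube n c s, σ x) ^ (a / b) ≤ T * U * (t ^ k * m) ^ (a / b) := by
        gcongr
        exact setLIntegral_cube_le_pow_mul hn ha hb hu hσ huσ c hs k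
    _ = T * (U * m ^ (a / b)) * (t ^ (a / b)) ^ k := by
        rw [ENNReal.mul_rpow_of_nonneg _ _ (by positivity), ← ENNReal.rpow_natCast,
          ← ENNReal.rpow_mul, mul_comm (k : ℝ), ENNReal.rpow_mul, ENNReal.rpow_natCast]
        ring
    _ ≤ T * (A ^ a * ENNReal.ofReal ((2 ^ k * s) ^ n) ^ (1 + a / b)) * (t ^ (a / b)) ^ k := by
        gcongr T * ?_ * _
        simpa only [volume_cube c (by positivity : 0 ≤ 2 ^ k * s)] using
          setLIntegral_mul_rpow_le_twoWeightChar (u := u) (σ := σ) ha hb.le c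
            (by positivity : 0 < 2 ^ k * s)
    _ = _ := by
        rw [← ofReal_rpow_mul_ofReal_pow_rpow (ℓ := 2 ^ k * s) hs (by positivity) he]
        ring

theorem lintegral_tail_rpow_mul_mul_rpow_le (hn : n ≠ 0) (ha : 0 < a) (hb : 0 < b)
    (hbal : 1 / a + 1 / b = 1 - α / n) (hu : Measurable u) (hσ : Measurable σ)
    (huσ : ∀ x, u x ^ (1 / a) * σ x ^ (1 / b) = 1) (c : E n) {s : ℝ} (hs : 0 < s) :
    (∫⁻ x, tail n α c s x ^ a * u x) * (∫⁻ x in cube n c s, σ x) ^ (a / b) ≤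
      (tailConst n α a b * twoWeightChar n a b u σ ^ (1 + b / a)) ^ a *
        ENNReal.ofReal (s ^ n) ^ (1 + a / b) := by
  set A := twoWeightChar n a b u σ
  set C₀ := ENNReal.ofReal (4 ^ ((n - α) * a)) * ENNReal.ofReal (s ^ n) ^ (1 + a / b) * A ^ a
  set t := 1 - (reverseDoublingConst a b A)⁻¹
  have he : n * (1 + a / b) = (n - α) * a := by
    field_simp at hbal ⊢
    linear_combination hbal
  have hαn : α ≤ n := by
    have : α / n < 1 := by linarith [show 0 < 1 / a + 1 / b by positivity]
    exact ((div_lt_one (by positivity)).mp this).le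
  rw [tailConst_mul_rpow_rpow n α ha hb]
  calc (∫⁻ x, tail n α c s x ^ a * u x) * (∫⁻ x in cube n c s, σ x) ^ (a / b)
      ≤ (∑' k : ℕ, ENNReal.ofReal ((4 * s / (2 ^ k * s)) ^ ((n - α) * a)) *
          ∫⁻ x in cube n c (2 ^ k * s), u x) * (∫⁻ x in cube n c s, σ x) ^ (a / b) := by
        gcongr
        exact lintegral_tail_rpow_mul_le ha.le hαn hu c hs
    _ ≤ ∑' k : ℕ, C₀ * (t ^ (a / b)) ^ k := by
        rw [← ENNReal.tsum_mul_right]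
        exact ENNReal.tsum_le_tsum (ofReal_mul_setLIntegral_mul_rpow_le hn ha hb he hu hσ huσ c hs)
    _ = C₀ * ∑' k : ℕ, (t ^ (a / b)) ^ k := ENNReal.tsum_mul_left
    _ ≤ C₀ * (reverseDoublingConst a b A / ENNReal.ofReal (min (a / b) 1)) := by
        gcongr
        exact tsum_rpow_one_sub_inv_pow_le
          (one_lt_reverseDoublingConst ha hb (one_le_twoWeightChar ha hb hu hσ huσ)).le
          (by positivity)
    _ = _ := by ring

theorem tailedChar_le (hn : n ≠ 0) (ha : 0 < a) (hb : 0 < b)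
    (hbal : 1 / a + 1 / b = 1 - α / n) (hu : Measurable u) (hσ : Measurable σ)
    (huσ : ∀ x, u x ^ (1 / a) * σ x ^ (1 / b) = 1) :
    tailedChar n α a b u σ ≤ tailConst n α a b * twoWeightChar n a b u σ ^ (1 + b / a) :=
  iSup₂_le fun c s => iSup_le fun hs =>
    (inv_mul_rpow_mul_inv_mul_rpow_le_iff (by simp; positivity) ofReal_ne_top ha hb.le).mpr
      (lintegral_tail_rpow_mul_mul_rpow_le hn ha hb hbal hu hσ huσ c hs)

end Char

theorem rpow_one_div_mul_rpow_neg_one_div {x : ℝ≥0∞} (hx₀ : x ≠ 0) (hx : x ≠ ∞) {a b : ℝ}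
    (ha : a ≠ 0) (hb : b ≠ 0) : (x ^ a) ^ (1 / a) * (x ^ (-b)) ^ (1 / b) = 1 := by
  rw [← ENNReal.rpow_mul, ← ENNReal.rpow_mul, mul_one_div_cancel ha, neg_mul,
    mul_one_div_cancel hb, ENNReal.rpow_neg_one, ENNReal.rpow_one, ENNReal.mul_inv_cancel hx₀ hx]

theorem one_sub_one_div_eq_one_div_conjExponent {p : ℝ} (hp : 1 < p) :
    1 - 1 / p = 1 / (p / (p - 1)) := by
  simp only [one_div]
  exact (Real.HolderConjugate.conjExponent hp).one_sub_inv

theorem Apq_eq_twoWeightChar (n : ℕ) {p : ℝ} (hp : 1 < p) (q : ℝ) (w : E n → ℝ≥0∞) :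
    Apq n p q w =
      twoWeightChar n q (p / (p - 1)) (fun x => w x ^ q) fun x => w x ^ (-(p / (p - 1))) := by
  simp only [Apq, twoWeightChar, one_sub_one_div_eq_one_div_conjExponent hp]

theorem AbarPq_eq_tailedChar_add_tailedChar (n : ℕ) (α : ℝ) {p : ℝ} (hp : 1 < p) (q : ℝ)
    (w : E n → ℝ≥0∞) :
    AbarPq n α p q w =
      tailedChar n α q (p / (p - 1)) (fun x => w x ^ q) (fun x => w x ^ (-(p / (p - 1)))) +
        tailedChar n α (p / (p - 1)) q (fun x => w x ^ (-(p / (p - 1)))) fun x => w x ^ q := by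
  simp only [AbarPq, tailedChar, one_sub_one_div_eq_one_div_conjExponent hp]
  congr 1
  simp only [mul_comm]

theorem oneTailed_le_power_of_Apq_general (n : ℕ) (hn : 0 < n) (p q α : ℝ)
    (hp : 1 < p) (hpq : p < q)
    (hbal : 1 / p - 1 / q = α / (n : ℝ)) :
    ∃ C : ℝ≥0∞, C ≠ ∞ ∧
      ∀ w : E n → ℝ≥0∞, Measurable w → (∀ x, 0 < w x ∧ w x < ∞) →
        Apq n p q w ≠ ∞ →
        AbarPq n α p q w
          ≤ C * Apq n p q w ^ (1 + max ((p / (p - 1)) / q) (q / (p / (p - 1)))) := by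
  have hconj := one_sub_one_div_eq_one_div_conjExponent hp
  set b := p / (p - 1)
  have hq : 0 < q := by linarith
  have hb : 0 < b := div_pos (by linarith) (by linarith)
  have hbal' : 1 / q + 1 / b = 1 - α / n := by linarith
  refine ⟨tailConst n α q b + tailConst n α b q,
    ENNReal.add_ne_top.mpr ⟨tailConst_ne_top n α hq hb, tailConst_ne_top n α hb hq⟩,
    fun w hw hw_pos _ => ?_⟩
  have huσ (x : E n) : (w x ^ q) ^ (1 / q) * (w x ^ (-b)) ^ (1 / b) = 1 :=
    rpow_one_div_mul_rpow_neg_one_div (hw_pos x).1.ne' (hw_pos x).2.ne hq.ne' hb.ne'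
  have hA₁ := one_le_twoWeightChar (n := n) hq hb (hw.pow_const q) (hw.pow_const (-b)) huσ
  rw [AbarPq_eq_tailedChar_add_tailedChar n α hp, Apq_eq_twoWeightChar n hp, add_mul]
  gcongr ?_ + ?_
  · refine (tailedChar_le hn.ne' hq hb hbal' (hw.pow_const q) (hw.pow_const (-b)) huσ).trans ?_
    gcongr
    exact le_max_left _ _
  · refine (tailedChar_le hn.ne' hb hq (by linarith) (hw.pow_const (-b)) (hw.pow_const q)
      fun x => (mul_comm _ _).trans (huσ x)).trans ?_
    rw [← twoWeightChar_comm]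
    gcongr
    exact le_max_right _ _

/-- **The one-tailed characteristic is controlled by a power of the no-tail one.**  Let
`1 < p < q < ∞` and `0 < α < n` with `1/p − 1/q = α/n`.  There is a constant
`C = C_{p,q,n} < ∞` such that every positive finite measurable weight `w` with
`A_{p,q}(w) < ∞` satisfies `Ā_{p,q}(w) ≤ C · A_{p,q}(w)^{1 + max{p'/q, q/p'}}`. -/
theorem oneTailed_le_power_of_Apq (n : ℕ) (hn : 0 < n) (p q α : ℝ)
    (hp : 1 < p) (hpq : p < q) (hα : 0 < α) (hαn : α < n)
    (hbal : 1 / p - 1 / q = α / (n : ℝ)) :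
    ∃ C : ℝ≥0∞, C ≠ ∞ ∧
      ∀ w : E n → ℝ≥0∞, Measurable w → (∀ x, 0 < w x ∧ w x < ∞) →
        Apq n p q w ≠ ∞ →
        AbarPq n α p q w
          ≤ C * Apq n p q w ^ (1 + max ((p / (p - 1)) / q) (q / (p / (p - 1)))) :=
  oneTailed_le_power_of_Apq_general n hn p q α hp hpq hbal

end
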